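/- arXiv:2405.19108 — 2 statements merged into one kernel-verified Lean document; each statement's English description precedes it below -/
import Mathlib

section
/- Let N_{1|0} : M_{d₀}(ℂ) → M_{d₁}(ℂ), N_{2|1} : M_{d₁}(ℂ) → M_{d₂}(ℂ), and N_{2|0} : M_{d₀}(ℂ) → M_{d₂}(ℂ) be completely positive trace-preserving maps, and let ϱ_{1|0}, ϱ_{2|1}, ϱ_{2|0} be the partial transposes on the first factor of their respective Jamiołkowski images. Then the composition law N_{2|0} = N_{2|1} ∘ N_{1|0} holds if and only if ϱ_{2|0} = Tr_{H₁}[ (𝟙_{d₀} ⊗ ϱ_{2|1})^{T_{H₁}} (ϱ_{1|0} ⊗ 𝟙_{d₂}) ], where both sides are matrices in M_{d₀}(ℂ) ⊗ M_{d₂}(ℂ), the operators inside the partial trace act on M_{d₀}(ℂ) ⊗ M_{d₁}(ℂ) ⊗ M_{d₂}(ℂ), T_{H₁} denotes partial transposition on the middle factor, and Tr_{H₁} the partial trace over the middle factor. -/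
open Matrix Kronecker
open scoped ComplexOrder

noncomputable section

/-- Jamiołkowski image of a linear map `N : M_a(ℂ) → M_b(ℂ)`:
`ρ = Σ_{i,j} |i⟩⟨j| ⊗ N(|j⟩⟨i|)`. -/
def jamImage {a b : ℕ} (N : Matrix (Fin a) (Fin a) ℂ →ₗ[ℂ] Matrix (Fin b) (Fin b) ℂ) :
    Matrix (Fin a × Fin b) (Fin a × Fin b) ℂ :=
  ∑ i : Fin a, ∑ j : Fin a,
    Matrix.single i j (1 : ℂ) ⊗ₖ N (Matrix.single j i (1 : ℂ))

/-- Partial transpose on the first tensor factor of `M_a(ℂ) ⊗ M_b(ℂ)`. -/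
def ptransposeA {a b : ℕ} (ρ : Matrix (Fin a × Fin b) (Fin a × Fin b) ℂ) :
    Matrix (Fin a × Fin b) (Fin a × Fin b) ℂ :=
  Matrix.of fun p q => ρ (q.1, p.2) (p.1, q.2)

/-- Partial trace over the second tensor factor. -/
def ptraceB {a b : ℕ} (ρ : Matrix (Fin a × Fin b) (Fin a × Fin b) ℂ) :
    Matrix (Fin a) (Fin a) ℂ :=
  Matrix.of fun i j => ∑ k : Fin b, ρ (i, k) (j, k)

/-- Partial trace over the first tensor factor. -/
def ptraceA {a b : ℕ} (ρ : Matrix (Fin a × Fin b) (Fin a × Fin b) ℂ) :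
    Matrix (Fin b) (Fin b) ℂ :=
  Matrix.of fun k l => ∑ i : Fin a, ρ (i, k) (i, l)

/-- The extension `id_n ⊗ Φ` of a map `Φ` on matrices, acting on `M_n(ℂ) ⊗ M_a(ℂ)`. -/
def idTensor {n a b : ℕ} (Φ : Matrix (Fin a) (Fin a) ℂ → Matrix (Fin b) (Fin b) ℂ)
    (X : Matrix (Fin n × Fin a) (Fin n × Fin a) ℂ) :
    Matrix (Fin n × Fin b) (Fin n × Fin b) ℂ :=
  Matrix.of fun p q => Φ (Matrix.of fun i j => X (p.1, i) (q.1, j)) p.2 q.2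

/-- Complete positivity: every identity extension `id_n ⊗ Φ` preserves positive
semidefiniteness. -/
def IsCP {a b : ℕ} (Φ : Matrix (Fin a) (Fin a) ℂ → Matrix (Fin b) (Fin b) ℂ) : Prop :=
  ∀ (n : ℕ) (X : Matrix (Fin n × Fin a) (Fin n × Fin a) ℂ),
    X.PosSemidef → (idTensor Φ X).PosSemidef

/-- Trace preservation. -/
def IsTP {a b : ℕ} (Φ : Matrix (Fin a) (Fin a) ℂ → Matrix (Fin b) (Fin b) ℂ) : Prop :=
  ∀ σ, (Φ σ).trace = σ.trace

/-- Embedding `𝟙_{d₀} ⊗ B` of `B ∈ M_{d₁}(ℂ) ⊗ M_{d₂}(ℂ)` into the three-factor space. -/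
def emb12 {d₀ d₁ d₂ : ℕ} (B : Matrix (Fin d₁ × Fin d₂) (Fin d₁ × Fin d₂) ℂ) :
    Matrix (Fin d₀ × Fin d₁ × Fin d₂) (Fin d₀ × Fin d₁ × Fin d₂) ℂ :=
  (1 : Matrix (Fin d₀) (Fin d₀) ℂ) ⊗ₖ B

/-- Embedding `B ⊗ 𝟙_{d₂}` of `B ∈ M_{d₀}(ℂ) ⊗ M_{d₁}(ℂ)` into the three-factor space. -/
def emb01 {d₀ d₁ d₂ : ℕ} (B : Matrix (Fin d₀ × Fin d₁) (Fin d₀ × Fin d₁) ℂ) :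
    Matrix (Fin d₀ × Fin d₁ × Fin d₂) (Fin d₀ × Fin d₁ × Fin d₂) ℂ :=
  Matrix.of fun p q => B (p.1, p.2.1) (q.1, q.2.1) * (if p.2.2 = q.2.2 then 1 else 0)

/-- Partial transposition on the middle factor of the three-factor space. -/
def ptransposeMid {d₀ d₁ d₂ : ℕ}
    (A : Matrix (Fin d₀ × Fin d₁ × Fin d₂) (Fin d₀ × Fin d₁ × Fin d₂) ℂ) :
    Matrix (Fin d₀ × Fin d₁ × Fin d₂) (Fin d₀ × Fin d₁ × Fin d₂) ℂ :=
  Matrix.of fun p q => A (p.1, q.2.1, p.2.2) (q.1, p.2.1, q.2.2)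

/-- Partial trace over the middle factor of the three-factor space. -/
def ptraceMid {d₀ d₁ d₂ : ℕ}
    (A : Matrix (Fin d₀ × Fin d₁ × Fin d₂) (Fin d₀ × Fin d₁ × Fin d₂) ℂ) :
    Matrix (Fin d₀ × Fin d₂) (Fin d₀ × Fin d₂) ℂ :=
  Matrix.of fun p q => ∑ m : Fin d₁, A (p.1, m, p.2) (q.1, m, q.2)

/-- The link-product composition
`Tr_{H₁}[ (𝟙_{d₀} ⊗ ϱ_{2|1})^{T_{H₁}} (ϱ_{1|0} ⊗ 𝟙_{d₂}) ]`. -/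
def linkProd {d₀ d₁ d₂ : ℕ} (ϱ10 : Matrix (Fin d₀ × Fin d₁) (Fin d₀ × Fin d₁) ℂ)
    (ϱ21 : Matrix (Fin d₁ × Fin d₂) (Fin d₁ × Fin d₂) ℂ) :
    Matrix (Fin d₀ × Fin d₂) (Fin d₀ × Fin d₂) ℂ :=
  ptraceMid (ptransposeMid (emb12 ϱ21) * emb01 ϱ10)

/-!
Evaluating `ϱ = ptransposeA (jamImage N)` at `((i, k), (j, l))` gives the matrix entry
`N(|i⟩⟨j|)_{kl}`, so `N ↦ ϱ` is injective, and expanding `N_{1|0}(|i⟩⟨j|)` in matrix units shows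
that the composite map has the contraction of `ϱ_{1|0}` and `ϱ_{2|1}` over the middle index as
its `ϱ`; the link product is exactly this contraction.
-/

theorem Matrix.linearMap_apply_eq_sum_single {R m n p q : Type*} [CommSemiring R]
    [Fintype m] [Fintype n] [DecidableEq m] [DecidableEq n]
    (N : Matrix m n R →ₗ[R] Matrix p q R) (X : Matrix m n R) (k : p) (l : q) :
    N X k l = ∑ b, ∑ c, X b c * N (Matrix.single b c 1) k l := by
  conv_lhs => rw [Matrix.matrix_eq_sum_single X]
  have hsingle : ∀ b c, Matrix.single b c (X b c) = X b c • Matrix.single b c (1 : R) := by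
    simp
  simp only [hsingle, map_sum, map_smul, Matrix.sum_apply, Matrix.smul_apply, smul_eq_mul]

theorem ptransposeA_jamImage_apply {a b : ℕ}
    (N : Matrix (Fin a) (Fin a) ℂ →ₗ[ℂ] Matrix (Fin b) (Fin b) ℂ) (i j : Fin a) (k l : Fin b) :
    ptransposeA (jamImage N) (i, k) (j, l) = N (Matrix.single i j 1) k l := by
  simp [ptransposeA, jamImage, Matrix.sum_apply, Matrix.single, ite_and]

theorem ptransposeA_jamImage_injective {a b : ℕ} :
    Function.Injective fun N : Matrix (Fin a) (Fin a) ℂ →ₗ[ℂ] Matrix (Fin b) (Fin b) ℂ =>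
      ptransposeA (jamImage N) := by
  intro N N' h
  apply Matrix.ext_linearMap
  intro i j
  apply LinearMap.ext_ring
  ext k l
  simpa [ptransposeA_jamImage_apply] using congr_fun (congr_fun h (i, k)) (j, l)

theorem linkProd_apply {d₀ d₁ d₂ : ℕ} (ϱ10 : Matrix (Fin d₀ × Fin d₁) (Fin d₀ × Fin d₁) ℂ)
    (ϱ21 : Matrix (Fin d₁ × Fin d₂) (Fin d₁ × Fin d₂) ℂ) (i j : Fin d₀) (k l : Fin d₂) :
    linkProd ϱ10 ϱ21 (i, k) (j, l) =
      ∑ b : Fin d₁, ∑ c : Fin d₁, ϱ10 (i, b) (j, c) * ϱ21 (b, k) (c, l) := by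
  rw [Finset.sum_comm]
  simp [linkProd, ptraceMid, Matrix.mul_apply, ptransposeMid, emb12, emb01,
    Fintype.sum_prod_type, Matrix.one_apply, mul_comm]

theorem ptransposeA_jamImage_comp {d₀ d₁ d₂ : ℕ}
    (N10 : Matrix (Fin d₀) (Fin d₀) ℂ →ₗ[ℂ] Matrix (Fin d₁) (Fin d₁) ℂ)
    (N21 : Matrix (Fin d₁) (Fin d₁) ℂ →ₗ[ℂ] Matrix (Fin d₂) (Fin d₂) ℂ) :
    ptransposeA (jamImage (N21 ∘ₗ N10)) =
      linkProd (ptransposeA (jamImage N10)) (ptransposeA (jamImage N21)) := by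
  ext ⟨i, k⟩ ⟨j, l⟩
  rw [ptransposeA_jamImage_apply, linkProd_apply, LinearMap.comp_apply,
    Matrix.linearMap_apply_eq_sum_single N21]
  simp only [ptransposeA_jamImage_apply]

theorem statement5_general {d₀ d₁ d₂ : ℕ}
    (N10 : Matrix (Fin d₀) (Fin d₀) ℂ →ₗ[ℂ] Matrix (Fin d₁) (Fin d₁) ℂ)
    (N21 : Matrix (Fin d₁) (Fin d₁) ℂ →ₗ[ℂ] Matrix (Fin d₂) (Fin d₂) ℂ)
    (N20 : Matrix (Fin d₀) (Fin d₀) ℂ →ₗ[ℂ] Matrix (Fin d₂) (Fin d₂) ℂ) :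
    N20 = N21 ∘ₗ N10 ↔
      ptransposeA (jamImage N20) =
        linkProd (ptransposeA (jamImage N10)) (ptransposeA (jamImage N21)) := by
  rw [← ptransposeA_jamImage_comp]
  exact ptransposeA_jamImage_injective.eq_iff.symm

/-- for CPTP maps `N_{1|0}, N_{2|1}, N_{2|0}` with (first-factor partially
transposed) Jamiołkowski images `ϱ_{1|0}, ϱ_{2|1}, ϱ_{2|0}`, the composition law
`N_{2|0} = N_{2|1} ∘ N_{1|0}` holds iff
`ϱ_{2|0} = Tr_{H₁}[ (𝟙_{d₀} ⊗ ϱ_{2|1})^{T_{H₁}} (ϱ_{1|0} ⊗ 𝟙_{d₂}) ]`. -/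
theorem statement5 {d₀ d₁ d₂ : ℕ}
    (N10 : Matrix (Fin d₀) (Fin d₀) ℂ →ₗ[ℂ] Matrix (Fin d₁) (Fin d₁) ℂ)
    (N21 : Matrix (Fin d₁) (Fin d₁) ℂ →ₗ[ℂ] Matrix (Fin d₂) (Fin d₂) ℂ)
    (N20 : Matrix (Fin d₀) (Fin d₀) ℂ →ₗ[ℂ] Matrix (Fin d₂) (Fin d₂) ℂ)
    (h10 : IsCP ⇑N10 ∧ IsTP ⇑N10)
    (h21 : IsCP ⇑N21 ∧ IsTP ⇑N21)
    (h20 : IsCP ⇑N20 ∧ IsTP ⇑N20) :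
    N20 = N21 ∘ₗ N10 ↔
      ptransposeA (jamImage N20) =
        linkProd (ptransposeA (jamImage N10)) (ptransposeA (jamImage N21)) :=
  statement5_general N10 N21 N20
end
end

section
/- Let ϱ_{1|0} ∈ M_{d₀}(ℂ) ⊗ M_{d₁}(ℂ) and ϱ_{2|1} ∈ M_{d₁}(ℂ) ⊗ M_{d₂}(ℂ) be positive semidefinite matrices satisfying Tr_{H₁}[ϱ_{1|0}] = 𝟙_{d₀} and Tr_{H₂}[ϱ_{2|1}] = 𝟙_{d₁} (partial traces over the respective output factors). Then the matrix ϱ_{2|0} := Tr_{H₁}[ (𝟙_{d₀} ⊗ ϱ_{2|1})^{T_{H₁}} (ϱ_{1|0} ⊗ 𝟙_{d₂}) ] ∈ M_{d₀}(ℂ) ⊗ M_{d₂}(ℂ) is positive semidefinite and satisfies Tr_{H₂}[ϱ_{2|0}] = 𝟙_{d₀}; i.e., the link-product composition of two CPTP Choi matrices is again a CPTP Choi matrix. -/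
open Matrix Kronecker
open scoped ComplexOrder

noncomputable section

/-! The link product is a compression of `ϱ10 ⊗ ϱ21`: its `(p, q)` entry pairs the basis
vectors `|p.1, n⟩ ⊗ |n, p.2⟩` and `|q.1, m⟩ ⊗ |m, q.2⟩` and sums over `n` and `m`, and such a
block sum of a positive semidefinite matrix is positive semidefinite. Tracing out the output
factor contracts `ϱ21` to `Tr_{H₂} ϱ21 = 𝟙`, which leaves `Tr_{H₁} ϱ10 = 𝟙`. -/

theorem Matrix.PosSemidef.sum_blocks {𝕜 ι κ : Type*} [RCLike 𝕜] [Fintype ι] [DecidableEq ι]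
    [Fintype κ] {M : Matrix (ι × κ) (ι × κ) 𝕜} (hM : M.PosSemidef) :
    (Matrix.of fun i j => ∑ k, ∑ l, M (i, k) (j, l)).PosSemidef := by
  let K : Matrix ι (ι × κ) 𝕜 := Matrix.of fun i x => if x.1 = i then 1 else 0
  convert hM.mul_mul_conjTranspose_same K using 1
  ext i j
  simp only [K, of_apply, mul_apply, ite_mul, one_mul, zero_mul, Fintype.sum_prod_type,
    Finset.sum_comm (γ := ι), Finset.sum_ite_eq', Finset.mem_univ, ↓reduceIte, conjTranspose_apply,
    RCLike.star_def, MonoidWithZeroHom.map_ite_one_zero, mul_ite, mul_one, mul_zero]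
  exact Finset.sum_comm

theorem linkProd_apply_s8 {d₀ d₁ d₂ : ℕ} (ϱ10 : Matrix (Fin d₀ × Fin d₁) (Fin d₀ × Fin d₁) ℂ)
    (ϱ21 : Matrix (Fin d₁ × Fin d₂) (Fin d₁ × Fin d₂) ℂ) (p q : Fin d₀ × Fin d₂) :
    linkProd ϱ10 ϱ21 p q =
      ∑ n : Fin d₁, ∑ m : Fin d₁, ϱ10 (p.1, n) (q.1, m) * ϱ21 (n, p.2) (m, q.2) := by
  simp only [linkProd, ptraceMid, ptransposeMid, emb12, emb01, of_apply, mul_apply,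
    kroneckerMap_apply, one_apply, ite_mul, one_mul, zero_mul, mul_ite, mul_zero, ite_self,
    mul_comm, Fintype.sum_prod_type, Finset.sum_ite_irrel, Finset.sum_ite_eq', Finset.sum_ite_eq,
    Finset.mem_univ, ↓reduceIte, Finset.sum_const_zero]
  exact Finset.sum_comm

theorem posSemidef_linkProd {d₀ d₁ d₂ : ℕ}
    {ϱ10 : Matrix (Fin d₀ × Fin d₁) (Fin d₀ × Fin d₁) ℂ}
    {ϱ21 : Matrix (Fin d₁ × Fin d₂) (Fin d₁ × Fin d₂) ℂ}
    (h10 : ϱ10.PosSemidef) (h21 : ϱ21.PosSemidef) : (linkProd ϱ10 ϱ21).PosSemidef := by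
  let f : (Fin d₀ × Fin d₂) × Fin d₁ → (Fin d₀ × Fin d₁) × (Fin d₁ × Fin d₂) :=
    fun x => ((x.1.1, x.2), (x.2, x.1.2))
  have hblocks : linkProd ϱ10 ϱ21 =
      Matrix.of fun p q => ∑ n, ∑ m, (ϱ10 ⊗ₖ ϱ21).submatrix f f (p, n) (q, m) := by
    ext p q
    simp [linkProd_apply_s8, f]
  rw [hblocks]
  exact ((h10.kronecker h21).submatrix f).sum_blocks

theorem ptraceB_linkProd {d₀ d₁ d₂ : ℕ} (ϱ10 : Matrix (Fin d₀ × Fin d₁) (Fin d₀ × Fin d₁) ℂ)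
    (ϱ21 : Matrix (Fin d₁ × Fin d₂) (Fin d₁ × Fin d₂) ℂ) :
    ptraceB (linkProd ϱ10 ϱ21) =
      Matrix.of fun i j => ∑ n, ∑ m, ϱ10 (i, n) (j, m) * ptraceB ϱ21 n m := by
  ext i j
  simp only [ptraceB, of_apply, linkProd_apply_s8, Finset.mul_sum]
  rw [Finset.sum_comm]
  exact Finset.sum_congr rfl fun n _ => Finset.sum_comm

theorem ptraceB_linkProd_of_ptraceB_eq_one {d₀ d₁ d₂ : ℕ}
    (ϱ10 : Matrix (Fin d₀ × Fin d₁) (Fin d₀ × Fin d₁) ℂ)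
    {ϱ21 : Matrix (Fin d₁ × Fin d₂) (Fin d₁ × Fin d₂) ℂ} (h21 : ptraceB ϱ21 = 1) :
    ptraceB (linkProd ϱ10 ϱ21) = ptraceB ϱ10 := by
  rw [ptraceB_linkProd, h21]
  ext i j
  simp [ptraceB, one_apply]

/-- the link-product composition of two CPTP Choi matrices is again a CPTP
Choi matrix: it is positive semidefinite and its partial trace over the output factor is
the identity. -/
theorem statement8 {d₀ d₁ d₂ : ℕ}
    (ϱ10 : Matrix (Fin d₀ × Fin d₁) (Fin d₀ × Fin d₁) ℂ)
    (ϱ21 : Matrix (Fin d₁ × Fin d₂) (Fin d₁ × Fin d₂) ℂ)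
    (h10 : ϱ10.PosSemidef) (h21 : ϱ21.PosSemidef)
    (ht10 : ptraceB ϱ10 = 1) (ht21 : ptraceB ϱ21 = 1) :
    (linkProd ϱ10 ϱ21).PosSemidef ∧ ptraceB (linkProd ϱ10 ϱ21) = 1 :=
  ⟨posSemidef_linkProd h10 h21, (ptraceB_linkProd_of_ptraceB_eq_one ϱ10 ht21).trans ht10⟩
end
end
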